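/- Let d ≥ 2 and let (v,M) ∈ ℂ^d ⊕ so(d,ℂ) satisfy: v_j = 0 for 1 ≤ j ≤ d−1, v_d ≠ 0, M_{j,j+1} ≠ 0 for all 1 ≤ j ≤ d−1, and M_{j,k} = 0 for all k > j+1. If A ∈ O_d(ℂ) satisfies A v = v and A M Aᵀ = M, then A is the identity matrix. (The stabilizer in O_d(ℂ) of any point of the generic part of the relative section is trivial; hence the action of O_d(ℂ) is free on the invariant open set U_d(ℂ).) -/

import Mathlib

/-!
Since `v` is concentrated in the last coordinate and `M` vanishes strictly above its
superdiagonal, each application of `M` extends the support of `M ^ m *ᵥ v` by exactly one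
index towards the first coordinate, with a nonzero new entry; so the vectors `M ^ m *ᵥ v`,
`m < d`, form a triangular basis. An orthogonal `A` with `A M Aᵀ = M` commutes with `M`, so
together with `A v = v` it fixes every vector of this basis.
-/

open Matrix

namespace Matrix

variable {R : Type*} {d : ℕ}

section Semiring

variable [Semiring R] {M : Matrix (Fin d) (Fin d) R} {v : Fin d → R}

theorem pow_mulVec_apply_eq_zero (hM : ∀ j k : Fin d, (j : ℕ) + 1 < k → M j k = 0)
    (hv : ∀ j : Fin d, (j : ℕ) + 1 < d → v j = 0) :
    ∀ (m : ℕ) (j : Fin d), (j : ℕ) + m + 1 < d → (M ^ m *ᵥ v) j = 0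
  | 0, j, hj => by simpa using hv j hj
  | m + 1, j, hj => by
    rw [pow_succ', ← mulVec_mulVec]
    show ∑ k, M j k * (M ^ m *ᵥ v) k = 0
    refine Finset.sum_eq_zero fun k _ => ?_
    by_cases hk : (k : ℕ) + m + 1 < d
    · rw [pow_mulVec_apply_eq_zero hM hv m k hk, mul_zero]
    · rw [hM j k (by omega), zero_mul]

theorem pow_mulVec_apply_ne_zero [NoZeroDivisors R]
    (hM₁ : ∀ j k : Fin d, (k : ℕ) = j + 1 → M j k ≠ 0)
    (hM₂ : ∀ j k : Fin d, (j : ℕ) + 1 < k → M j k = 0)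
    (hv₁ : ∀ j : Fin d, (j : ℕ) + 1 < d → v j = 0)
    (hv₂ : ∀ j : Fin d, (j : ℕ) + 1 = d → v j ≠ 0) :
    ∀ (m : ℕ) (j : Fin d), (j : ℕ) + m + 1 = d → (M ^ m *ᵥ v) j ≠ 0
  | 0, j, hj => by simpa using hv₂ j hj
  | m + 1, j, hj => by
    let p : Fin d := ⟨j + 1, by omega⟩
    have hsum : (M *ᵥ (M ^ m *ᵥ v)) j = M j p * (M ^ m *ᵥ v) p := by
      show ∑ k, M j k * (M ^ m *ᵥ v) k = _
      refine Finset.sum_eq_single p (fun k _ hkp => ?_) (absurd (Finset.mem_univ p))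
      by_cases hk : (k : ℕ) + m + 1 < d
      · rw [pow_mulVec_apply_eq_zero hM₂ hv₁ m k hk, mul_zero]
      · have hkp' : (k : ℕ) ≠ j + 1 := fun h => hkp (Fin.ext h)
        rw [hM₂ j k (by omega), zero_mul]
    rw [pow_succ', ← mulVec_mulVec, hsum]
    exact mul_ne_zero (hM₁ j p rfl)
      (pow_mulVec_apply_ne_zero hM₁ hM₂ hv₁ hv₂ m p (show (j : ℕ) + 1 + m + 1 = d by omega))

end Semiring

/-- Columns in decreasing powers of `M`, so that under the hypotheses below it is lower
triangular. -/
def krylov [Semiring R] (M : Matrix (Fin d) (Fin d) R) (v : Fin d → R) :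
    Matrix (Fin d) (Fin d) R :=
  of fun j k => (M ^ (d - 1 - k) *ᵥ v) j

theorem det_krylov_ne_zero [CommRing R] [IsDomain R] {M : Matrix (Fin d) (Fin d) R}
    {v : Fin d → R}
    (hM₁ : ∀ j k : Fin d, (k : ℕ) = j + 1 → M j k ≠ 0)
    (hM₂ : ∀ j k : Fin d, (j : ℕ) + 1 < k → M j k = 0)
    (hv₁ : ∀ j : Fin d, (j : ℕ) + 1 < d → v j = 0)
    (hv₂ : ∀ j : Fin d, (j : ℕ) + 1 = d → v j ≠ 0) :
    (krylov M v).det ≠ 0 := by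
  have hlower : (krylov M v).IsLowerTriangular := fun j k hjk =>
    pow_mulVec_apply_eq_zero hM₂ hv₁ _ j (by have : j < k := hjk; omega)
  rw [det_of_isLowerTriangular _ hlower]
  exact Finset.prod_ne_zero_iff.mpr fun k _ =>
    pow_mulVec_apply_ne_zero hM₁ hM₂ hv₁ hv₂ _ k (by omega)

theorem mul_krylov_of_commute [Semiring R] {A M : Matrix (Fin d) (Fin d) R} {v : Fin d → R}
    (hAM : Commute A M) (hAv : A *ᵥ v = v) :
    A * krylov M v = krylov M v := by
  ext j k
  have h := congrFun (congrArg (· *ᵥ v) (hAM.pow_right (d - 1 - k)).eq) j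
  simp only [← mulVec_mulVec, hAv] at h
  simpa [krylov, mul_apply, mulVec, dotProduct] using h

theorem commute_of_mul_mul_transpose_eq [CommRing R] {A M : Matrix (Fin d) (Fin d) R}
    (hA : A * Aᵀ = 1) (hAM : A * M * Aᵀ = M) :
    Commute A M :=
  calc A * M = A * M * (Aᵀ * A) := by rw [mul_eq_one_comm.mp hA, mul_one]
    _ = M * A := by rw [← mul_assoc, hAM]

end Matrix

/-- the stabilizer in `O_d(ℂ)` of any point of the generic part of the
relative section is trivial: if `A ∈ O_d(ℂ)` fixes such a point `(v, M)`, then `A = 1`.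
(0-based indices.) -/
theorem stmt13 {d : ℕ} (hd : 2 ≤ d)
    (v : Fin d → ℂ) (M : Matrix (Fin d) (Fin d) ℂ)
    (hv1 : ∀ j : Fin d, (j : ℕ) + 1 < d → v j = 0)
    (hv2 : v ⟨d - 1, by omega⟩ ≠ 0)
    (hM1 : ∀ j k : Fin d, (k : ℕ) = (j : ℕ) + 1 → M j k ≠ 0)
    (hM2 : ∀ j k : Fin d, (j : ℕ) + 1 < (k : ℕ) → M j k = 0)
    (A : Matrix (Fin d) (Fin d) ℂ) (hA : A * Aᵀ = 1)
    (hAv : A.mulVec v = v) (hAM : A * M * Aᵀ = M) :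
    A = 1 := by
  have hv_last : ∀ j : Fin d, (j : ℕ) + 1 = d → v j ≠ 0 := fun j hj => by
    rwa [show j = ⟨d - 1, by omega⟩ from Fin.ext (by simp only; omega)]
  have hK : IsUnit (krylov M v) :=
    (isUnit_iff_isUnit_det _).mpr (det_krylov_ne_zero hM1 hM2 hv1 hv_last).isUnit
  exact hK.mul_eq_right.mp (mul_krylov_of_commute (commute_of_mul_mul_transpose_eq hA hAM) hAv)
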